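/- Let (W, (·,·)) be nondegenerate and ω ∈ W with (ω,ω) > 0; set φ := exp(iω) = (1, iω, −(ω,ω)/2) ∈ Ṽ ⊗ ℂ, so that ⟨φ,φ⟩ = 0 and ⟨φ,φ̄⟩ = 2·(ω,ω) > 0. For α ∈ W set τ_α := (0, iα, −(α,ω)) ∈ Ṽ ⊗ ℂ. Then: (a) ⟨τ_α, φ⟩ = 0 for every α ∈ W; (b) ⟨τ_α, τ̄_β⟩ = (α,β) is real, so Im⟨τ_α, τ̄_β⟩ = 0 for all α, β ∈ W; (c) with T_φ := {x ∈ Ṽ⊗ℂ : ⟨x,φ⟩ = 0 = ⟨x,φ̄⟩} and π : Ṽ⊗ℂ → T_φ the projection along ℂφ ⊕ ℂφ̄, the ℝ-linear map α ↦ π(τ_α) is injective and its image is isotropic for the form Ω(x,y) := Im⟨x,ȳ⟩ on T_φ and has real dimension dim W = (1/2)·dim_ℝ T_φ, i.e. it is a Lagrangian subspace of (T_φ, Ω). (This is the statement that the symplectic structures form a Lagrangian in the moduli space of generalized Calabi–Yau structures.) -/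

import Mathlib

open scoped TensorProduct ComplexOrder

set_option synthInstance.maxHeartbeats 1000000
set_option maxHeartbeats 1000000

noncomputable section

variable (W : Type) [AddCommGroup W] [Module ℝ W]

/-- The complexification `W_ℂ = ℂ ⊗ W`. -/
abbrev WC := ℂ ⊗[ℝ] W

/-- Complex conjugation on `ℂ`, as an ℝ-linear map. -/
def conjR : ℂ →ₗ[ℝ] ℂ := Complex.conjAe.toLinearMap

/-- Complex conjugation on `W_ℂ`, fixing the real points `W`. -/
def cW : WC W →ₗ[ℝ] WC W := LinearMap.rTensor W conjR

/-- The canonical embedding `W → W_ℂ`. -/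
def iW : W →ₗ[ℝ] WC W := TensorProduct.mk ℝ ℂ W 1

/-- The ℂ-bilinear extension of the form `q` to `W_ℂ`. -/
def qC (q : LinearMap.BilinForm ℝ W) : LinearMap.BilinForm ℂ (WC W) :=
  LinearMap.BilinForm.baseChange ℂ q

/-- The complexified Mukai extension `Ṽ ⊗ ℂ = ℂ ⊕ W_ℂ ⊕ ℂ`. -/
abbrev VT := ℂ × WC W × ℂ

/-- The ℂ-bilinear Mukai pairing `⟨(a,w,b),(a',w',b')⟩ = (w,w') − a·b' − a'·b` on `Ṽ ⊗ ℂ`. -/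
def Mc (q : LinearMap.BilinForm ℝ W) : VT W →ₗ[ℂ] VT W →ₗ[ℂ] ℂ :=
  LinearMap.mk₂ ℂ (fun x y => qC W q x.2.1 y.2.1 - x.1 * y.2.2 - y.1 * x.2.2)
    (fun x x' y => by simp [map_add]; ring)
    (fun c x y => by simp [map_smul, smul_eq_mul]; ring)
    (fun x y y' => by simp [map_add]; ring)
    (fun c x y => by simp [map_smul, smul_eq_mul]; ring)

/-- Conjugation on `Ṽ ⊗ ℂ`, fixing the real points `Ṽ`. -/
def cT (x : VT W) : VT W := ((starRingEnd ℂ) x.1, cW W x.2.1, (starRingEnd ℂ) x.2.2)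

/-- `exp(iω) := (1, iω, −(ω,ω)/2) ∈ Ṽ ⊗ ℂ`. -/
def expI (q : LinearMap.BilinForm ℝ W) (ω : W) : VT W :=
  ((1 : ℂ), Complex.I • iW W ω, ((-(q ω ω) / 2 : ℝ) : ℂ))

/-- `τ_α := (0, iα, −(α,ω)) ∈ Ṽ ⊗ ℂ`. -/
def tau (q : LinearMap.BilinForm ℝ W) (ω α : W) : VT W :=
  ((0 : ℂ), Complex.I • iW W α, ((-(q α ω) : ℝ) : ℂ))

/-- `T_φ := {x : ⟨x,φ⟩ = 0 = ⟨x,φ̄⟩}`. -/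
def Tspace (q : LinearMap.BilinForm ℝ W) (φ : VT W) : Submodule ℂ (VT W) :=
  LinearMap.ker ((Mc W q).flip φ) ⊓ LinearMap.ker ((Mc W q).flip (cT W φ))

/-!
Both `exp(iω)` and every `τ_α` lie in the real subspace `{(a, i w, b)}` of `Ṽ ⊗ ℂ`, on which
`⟨x, ȳ⟩` is the real Mukai pairing. Since `⟨τ_α, φ⟩ = 0`, `⟨τ_α, φ̄⟩ = 2(α,ω)`, `⟨φ, φ⟩ = 0` and
`⟨φ, φ̄⟩ = 2(ω,ω)`, the projection of `τ_α` is `τ_α − ((α,ω)/(ω,ω)) φ`, which stays in that real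
subspace: so `Ω` vanishes on the image, and `α` is recovered from the projection (its first
coordinate gives the coefficient). Finally `T_φ` is cut out of the `(dim W + 2)`-dimensional space
`Ṽ ⊗ ℂ` by two independent ℂ-linear equations, so `dim_ℝ T_φ = 2 dim W`.
-/

variable {W}

lemma iW_injective : Function.Injective (iW W) := by
  have h := Module.Flat.rTensor_preserves_injective_linearMap (M := W)
    (Algebra.linearMap ℝ ℂ) (algebraMap ℝ ℂ).injective
  intro a b hab
  apply (TensorProduct.lid ℝ W).symm.injective
  apply h
  simpa [iW] using hab

lemma cW_smul_iW (c : ℂ) (u : W) : cW W (c • iW W u) = starRingEnd ℂ c • iW W u := by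
  simp [cW, conjR, iW, TensorProduct.smul_tmul']

lemma qC_iW (q : LinearMap.BilinForm ℝ W) (u v : W) : qC W q (iW W u) (iW W v) = q u v := by
  simp [qC, iW]

variable (W) in
def embedI : ℝ × W × ℝ →ₗ[ℝ] VT W :=
  Complex.ofRealAm.toLinearMap.prodMap
    ((Complex.I • iW W).prodMap Complex.ofRealAm.toLinearMap)

lemma embedI_apply (x : ℝ × W × ℝ) :
    embedI W x = ((x.1 : ℂ), Complex.I • iW W x.2.1, (x.2.2 : ℂ)) := rfl

lemma embedI_injective : Function.Injective (embedI W) := by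
  have hI : Function.Injective (Complex.I • iW W) := fun a b h =>
    iW_injective (smul_right_injective _ Complex.I_ne_zero h)
  exact Complex.ofReal_injective.prodMap (hI.prodMap Complex.ofReal_injective)

lemma cT_embedI (x : ℝ × W × ℝ) : cT W (embedI W x) = embedI W (x.1, -x.2.1, x.2.2) := by
  simp [embedI_apply, cT, cW_smul_iW]

def expR (q : LinearMap.BilinForm ℝ W) (ω : W) : ℝ × W × ℝ := (1, ω, -q ω ω / 2)

def tauR (q : LinearMap.BilinForm ℝ W) (ω : W) : W →ₗ[ℝ] ℝ × W × ℝ :=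
  (0 : W →ₗ[ℝ] ℝ).prod (LinearMap.id.prod (-q.flip ω))

lemma tauR_apply (q : LinearMap.BilinForm ℝ W) (ω α : W) : tauR q ω α = (0, α, -q α ω) := rfl

lemma mem_Tspace (q : LinearMap.BilinForm ℝ W) (φ x : VT W) :
    x ∈ Tspace W q φ ↔ Mc W q x φ = 0 ∧ Mc W q x (cT W φ) = 0 := by
  simp [Tspace]

section Pairing

variable (q : LinearMap.BilinForm ℝ W)

lemma Mc_embedI_embedI (x y : ℝ × W × ℝ) :
    Mc W q (embedI W x) (embedI W y) = ((-q x.2.1 y.2.1 - x.1 * y.2.2 - y.1 * x.2.2 : ℝ) : ℂ) := by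
  simp only [Mc, embedI_apply, LinearMap.mk₂_apply, map_smul, LinearMap.smul_apply, qC_iW,
    smul_eq_mul]
  push_cast
  linear_combination (q x.2.1 y.2.1 : ℂ) * Complex.I_mul_I

lemma Mc_embedI_cT_embedI (x y : ℝ × W × ℝ) :
    Mc W q (embedI W x) (cT W (embedI W y)) =
      ((q x.2.1 y.2.1 - x.1 * y.2.2 - y.1 * x.2.2 : ℝ) : ℂ) := by
  rw [cT_embedI, Mc_embedI_embedI]
  simp

variable (ω : W)

lemma expI_eq_embedI : expI W q ω = embedI W (expR q ω) := by
  simp [expI, expR, embedI_apply, neg_div]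

lemma tau_eq_embedI (α : W) : tau W q ω α = embedI W (tauR q ω α) := by
  simp [tau, tauR_apply, embedI_apply]

lemma Mc_expI_expI : Mc W q (expI W q ω) (expI W q ω) = 0 := by
  rw [expI_eq_embedI, Mc_embedI_embedI]; push_cast [expR, map_neg, LinearMap.neg_apply]; ring

lemma Mc_expI_cT_expI : Mc W q (expI W q ω) (cT W (expI W q ω)) = 2 * q ω ω := by
  rw [expI_eq_embedI, Mc_embedI_cT_embedI]; push_cast [expR, map_neg, LinearMap.neg_apply]; ring

lemma Mc_cT_expI_expI : Mc W q (cT W (expI W q ω)) (expI W q ω) = 2 * q ω ω := by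
  rw [expI_eq_embedI, cT_embedI, Mc_embedI_embedI]
  push_cast [expR, map_neg, LinearMap.neg_apply]
  ring

lemma Mc_cT_expI_cT_expI : Mc W q (cT W (expI W q ω)) (cT W (expI W q ω)) = 0 := by
  rw [expI_eq_embedI, cT_embedI, Mc_embedI_embedI]
  push_cast [expR, map_neg, LinearMap.neg_apply]
  ring

lemma Mc_tau_expI (α : W) : Mc W q (tau W q ω α) (expI W q ω) = 0 := by
  rw [tau_eq_embedI, expI_eq_embedI, Mc_embedI_embedI]; push_cast [expR, tauR_apply]; ring

lemma Mc_tau_cT_expI (α : W) : Mc W q (tau W q ω α) (cT W (expI W q ω)) = 2 * q α ω := by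
  rw [tau_eq_embedI, expI_eq_embedI, Mc_embedI_cT_embedI]; push_cast [expR, tauR_apply]; ring

lemma Mc_tau_cT_tau (α β : W) : Mc W q (tau W q ω α) (cT W (tau W q ω β)) = q α β := by
  rw [tau_eq_embedI, tau_eq_embedI, Mc_embedI_cT_embedI]; simp [tauR_apply]

end Pairing

section Projection

variable (q : LinearMap.BilinForm ℝ W) (ω : W)

def projTauR : W →ₗ[ℝ] ℝ × W × ℝ :=
  tauR q ω - ((q ω ω)⁻¹ • q.flip ω).smulRight (expR q ω)

lemma projTauR_injective : Function.Injective (projTauR q ω) := by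
  refine (injective_iff_map_eq_zero _).2 fun α hα => ?_
  have hc : (q ω ω)⁻¹ * q α ω = 0 := by
    simpa [projTauR, tauR_apply, expR] using congrArg Prod.fst hα
  simpa [projTauR, tauR_apply, expR, hc] using congrArg (fun x => x.2.1) hα

lemma apply_tau_eq_embedI_projTauR (hω : q ω ω ≠ 0) (π : VT W →ₗ[ℂ] VT W)
    (hπT : ∀ x ∈ Tspace W q (expI W q ω), π x = x) (hπφ : π (expI W q ω) = 0) (α : W) :
    π (tau W q ω α) = embedI W (projTauR q ω α) := by
  have hproj :
      embedI W (projTauR q ω α) = tau W q ω α - ((q α ω / q ω ω : ℝ) : ℂ) • expI W q ω := by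
    rw [tau_eq_embedI, expI_eq_embedI, ← Complex.coe_algebraMap, algebraMap_smul, ← map_smul,
      ← map_sub]
    simp [projTauR, div_eq_inv_mul]
  have hmem :
      tau W q ω α - ((q α ω / q ω ω : ℝ) : ℂ) • expI W q ω ∈ Tspace W q (expI W q ω) := by
    rw [mem_Tspace]
    simp only [map_sub, map_smul, LinearMap.sub_apply, LinearMap.smul_apply, smul_eq_mul,
      Mc_tau_expI, Mc_expI_expI, Mc_tau_cT_expI, Mc_expI_cT_expI]
    constructor
    · ring
    · push_cast
      field_simp
      ring
  rw [hproj, ← hπT _ hmem, map_sub, map_smul, hπφ, smul_zero, sub_zero]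

end Projection

section Dimension

open Module

theorem LinearMap.finrank_ker_inf_ker_add_two {K V : Type*} [Field K] [AddCommGroup V]
    [Module K V] [FiniteDimensional K V] (f g : V →ₗ[K] K) {u v : V}
    (hfu : f u ≠ 0) (hgu : g u = 0) (hfv : f v = 0) (hgv : g v ≠ 0) :
    finrank K ↥(LinearMap.ker f ⊓ LinearMap.ker g) + 2 = finrank K V := by
  have hsurj : Function.Surjective (f.prod g) := fun p =>
    ⟨(p.1 / f u) • u + (p.2 / g v) • v, by ext <;> simp [hgu, hfv, hfu, hgv]⟩
  have h := (f.prod g).finrank_range_add_finrank_ker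
  rwa [LinearMap.range_eq_top.2 hsurj, finrank_top, finrank_prod, finrank_self,
    LinearMap.ker_prod, add_comm] at h

theorem Submodule.finrank_restrictScalars {F K V : Type*} [Field F] [Field K] [Algebra F K]
    [AddCommGroup V] [Module K V] [Module F V] [IsScalarTower F K V] (p : Submodule K V) :
    finrank F (p.restrictScalars F) = finrank F K * finrank K p :=
  ((p.restrictScalarsEquiv F K V).restrictScalars F).finrank_eq.trans
    (finrank_mul_finrank F K p).symm

lemma finrank_VT [FiniteDimensional ℝ W] : finrank ℂ (VT W) = finrank ℝ W + 2 := by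
  simp [finrank_prod]
  ring

lemma finrank_Tspace_expI [FiniteDimensional ℝ W] (q : LinearMap.BilinForm ℝ W) {ω : W}
    (hω : q ω ω ≠ 0) :
    finrank ℝ ((Tspace W q (expI W q ω)).restrictScalars ℝ) = 2 * finrank ℝ W := by
  have h2 : (2 * q ω ω : ℂ) ≠ 0 := by exact_mod_cast mul_ne_zero two_ne_zero hω
  have h := LinearMap.finrank_ker_inf_ker_add_two ((Mc W q).flip (expI W q ω))
    ((Mc W q).flip (cT W (expI W q ω))) (u := cT W (expI W q ω)) (v := expI W q ω)
    (by simpa [Mc_cT_expI_expI] using h2) (by simp [Mc_cT_expI_cT_expI])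
    (by simp [Mc_expI_expI]) (by simpa [Mc_expI_cT_expI] using h2)
  rw [finrank_VT, add_left_inj] at h
  rw [Submodule.finrank_restrictScalars, Complex.finrank_real_complex, Tspace, h]

end Dimension

theorem symplectic_structures_form_lagrangian_general
    (W : Type) [AddCommGroup W] [Module ℝ W] [FiniteDimensional ℝ W]
    (q : LinearMap.BilinForm ℝ W)
    (ω : W) (hω : 0 < q ω ω)
    (π : VT W →ₗ[ℂ] VT W)
    (hπT : ∀ x ∈ Tspace W q (expI W q ω), π x = x)
    (hπφ : π (expI W q ω) = 0) :
    (Mc W q (expI W q ω) (expI W q ω) = 0 ∧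
      Mc W q (expI W q ω) (cT W (expI W q ω)) = 2 * (q ω ω : ℂ)) ∧
    (∀ α : W, Mc W q (tau W q ω α) (expI W q ω) = 0) ∧
    (∀ α β : W, Mc W q (tau W q ω α) (cT W (tau W q ω β)) = (q α β : ℂ) ∧
      (Mc W q (tau W q ω α) (cT W (tau W q ω β))).im = 0) ∧
    (Function.Injective (fun α : W => π (tau W q ω α)) ∧
      (∀ α β : W, (Mc W q (π (tau W q ω α)) (cT W (π (tau W q ω β)))).im = 0) ∧
      Module.finrank ℝ
        (Submodule.span ℝ (Set.range (fun α : W => π (tau W q ω α)))) =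
          Module.finrank ℝ W ∧
      2 * Module.finrank ℝ W =
        Module.finrank ℝ (Submodule.restrictScalars ℝ (Tspace W q (expI W q ω)))) := by
  have hπτ := apply_tau_eq_embedI_projTauR q ω hω.ne' π hπT hπφ
  have hπτ_comp : (fun α => π (tau W q ω α)) = embedI W ∘ₗ projTauR q ω := funext hπτ
  have hinj : Function.Injective (embedI W ∘ₗ projTauR q ω) :=
    embedI_injective.comp (projTauR_injective q ω)
  refine ⟨⟨Mc_expI_expI q ω, Mc_expI_cT_expI q ω⟩, Mc_tau_expI q ω,
    fun α β => ⟨Mc_tau_cT_tau q ω α β, by rw [Mc_tau_cT_tau, Complex.ofReal_im]⟩,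
    hπτ_comp ▸ hinj,
    fun α β => by rw [hπτ, hπτ, Mc_embedI_cT_embedI, Complex.ofReal_im], ?_,
    (finrank_Tspace_expI q hω.ne').symm⟩
  rw [hπτ_comp, ← LinearMap.coe_range, Submodule.span_eq, LinearMap.finrank_range_of_inj hinj]

/-- The symplectic structures form a Lagrangian: with `φ = exp(iω)`,
one has `⟨φ,φ⟩ = 0`, `⟨φ,φ̄⟩ = 2(ω,ω) > 0`; (a) `⟨τ_α,φ⟩ = 0`; (b) `⟨τ_α,τ̄_β⟩ = (α,β)` is
real; (c) for the projection `π` onto `T_φ` along `ℂφ ⊕ ℂφ̄`, the map `α ↦ π(τ_α)` is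
injective, its image is `Ω`-isotropic of real dimension `dim W = (1/2)·dim_ℝ T_φ`, i.e. a
Lagrangian subspace of `(T_φ, Ω)`. -/
theorem symplectic_structures_form_lagrangian
    (W : Type) [AddCommGroup W] [Module ℝ W] [FiniteDimensional ℝ W]
    (q : LinearMap.BilinForm ℝ W) (hsymm : ∀ u v : W, q u v = q v u)
    (hnd : LinearMap.BilinForm.Nondegenerate q)
    (ω : W) (hω : 0 < q ω ω)
    (π : VT W →ₗ[ℂ] VT W)
    (hπT : ∀ x ∈ Tspace W q (expI W q ω), π x = x)
    (hπφ : π (expI W q ω) = 0)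
    (hπφbar : π (cT W (expI W q ω)) = 0)
    (hπrange : ∀ x : VT W, π x ∈ Tspace W q (expI W q ω)) :
    (Mc W q (expI W q ω) (expI W q ω) = 0 ∧
      Mc W q (expI W q ω) (cT W (expI W q ω)) = 2 * (q ω ω : ℂ)) ∧
    (∀ α : W, Mc W q (tau W q ω α) (expI W q ω) = 0) ∧
    (∀ α β : W, Mc W q (tau W q ω α) (cT W (tau W q ω β)) = (q α β : ℂ) ∧
      (Mc W q (tau W q ω α) (cT W (tau W q ω β))).im = 0) ∧
    (Function.Injective (fun α : W => π (tau W q ω α)) ∧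
      (∀ α β : W, (Mc W q (π (tau W q ω α)) (cT W (π (tau W q ω β)))).im = 0) ∧
      Module.finrank ℝ
        (Submodule.span ℝ (Set.range (fun α : W => π (tau W q ω α)))) =
          Module.finrank ℝ W ∧
      2 * Module.finrank ℝ W =
        Module.finrank ℝ (Submodule.restrictScalars ℝ (Tspace W q (expI W q ω)))) :=
  symplectic_structures_form_lagrangian_general W q ω hω π hπT hπφ
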